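/- Let p, q, r, u, s, t be vectors in ℂ^3 with [p,u,s] ≠ 0, [q,r,s] ≠ 0, [p,q,t] ≠ 0, [q,u,s] ≠ 0 and [p,s,t] ≠ 0. Then ([p,q,r]·[q,u,s]·[p,s,t] / ([p,u,s]·[q,r,s]·[p,q,t])) · (1 + [p,q,s]·[u,s,t] / ([q,u,s]·[p,s,t])) = [p,q,r]·[q,s,t] / ([q,r,s]·[p,q,t]). (With p = x₁, q = x₂, r = x₃, u = x_{m+1}, s = x_{m+2}, t = x_{m+3}, this is the wall-crossing identity X_{r_-}^*(y_{γ21}(1 + y_{γ13})) = X_{r_+}^*(y_{γ23}) for the pair of adjacent zeros {z_{m−1}, z_m}, verified in the proof that the Riemann–Hilbert solutions jump by the wall-crossing automorphism S(l).) -/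

import Mathlib

/-- `det3 u v w` is the determinant of the 3×3 matrix whose columns are `u`, `v`, `w`. -/
def det3 (u v w : Fin 3 → ℂ) : ℂ :=
  Matrix.det (Matrix.transpose (Matrix.of ![u, v, w]))

lemma det3_expand (a b c : Fin 3 → ℂ) :
    det3 a b c = a 0 * b 1 * c 2 - a 0 * c 1 * b 2 - b 0 * a 1 * c 2
      + b 0 * c 1 * a 2 + c 0 * a 1 * b 2 - c 0 * b 1 * a 2 := by
  rw [det3, Matrix.det_transpose]
  simp [Matrix.det_fin_three]
  ring

/-- The wall-crossing identity `X_{r_-}^*(y_{γ21}(1 + y_{γ13})) = X_{r_+}^*(y_{γ23})` for the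
pair of adjacent zeros `{z_{m−1}, z_m}`: with `p = x₁, q = x₂, r = x₃, u = x_{m+1},
s = x_{m+2}, t = x_{m+3}`,
`([p,q,r]·[q,u,s]·[p,s,t] / ([p,u,s]·[q,r,s]·[p,q,t])) · (1 + [p,q,s]·[u,s,t]/([q,u,s]·[p,s,t]))
  = [p,q,r]·[q,s,t] / ([q,r,s]·[p,q,t])`. -/
theorem wall_crossing_identity_adjacent_zeros
    (p q r u s t : Fin 3 → ℂ)
    (hpus : det3 p u s ≠ 0) (hqrs : det3 q r s ≠ 0) (hpqt : det3 p q t ≠ 0)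
    (hqus : det3 q u s ≠ 0) (hpst : det3 p s t ≠ 0) :
    (det3 p q r * det3 q u s * det3 p s t / (det3 p u s * det3 q r s * det3 p q t)) *
      (1 + det3 p q s * det3 u s t / (det3 q u s * det3 p s t)) =
    det3 p q r * det3 q s t / (det3 q r s * det3 p q t) := by
  have key : det3 q u s * det3 p s t + det3 p q s * det3 u s t
      = det3 p u s * det3 q s t := by
    simp only [det3_expand]; ring
  have h1 : 1 + det3 p q s * det3 u s t / (det3 q u s * det3 p s t)
      = det3 p u s * det3 q s t / (det3 q u s * det3 p s t) := by
    field_simp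
    linear_combination key
  rw [h1]
  field_simp
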